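/- arXiv:2407.07865 — 5 statements merged into one kernel-verified Lean document; each statement's English description precedes it below -/
import Mathlib

section
/- Let a, b ∈ ℝ. If there exists some γ > 0 such that a = -(1/γ)·max(0, b - γ·a), then for every γ' > 0 it also holds that a = -(1/γ')·max(0, b - γ'·a). In other words, the validity of the penalized reformulation is independent of the choice of the positive penalty parameter. -/
/-- If the penalized reformulation `a = -(1/γ)·max 0 (b - γ·a)` holds for some `γ > 0`,
then it holds for every `γ' > 0`: validity is independent of the penalty parameter. -/
theorem penalized_param_independent (a b : ℝ)
    (h : ∃ γ : ℝ, 0 < γ ∧ a = -(1 / γ) * max 0 (b - γ * a)) :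
    ∀ γ' : ℝ, 0 < γ' → a = -(1 / γ') * max 0 (b - γ' * a) := by
  obtain ⟨γ, hγ, heq⟩ := h
  intro γ' hγ'
  rcases le_or_gt (b - γ * a) 0 with hba | hba
  · have hmax : max 0 (b - γ * a) = 0 := max_eq_left hba
    have ha : a = 0 := by rw [hmax] at heq; simpa using heq
    have hb : b ≤ 0 := by rw [ha] at hba; simpa using hba
    rw [ha]
    have : max 0 (b - γ' * 0) = 0 := by simpa using max_eq_left hb
    rw [this]; ring
  · have hmax : max 0 (b - γ * a) = b - γ * a := max_eq_right hba.le
    rw [hmax] at heq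
    have hb : b = 0 := by
      field_simp at heq
      nlinarith
    have ha : a < 0 := by
      rw [hb] at hba; nlinarith
    rw [hb]
    have : max 0 (0 - γ' * a) = -γ' * a := by
      rw [max_eq_right]; ring; nlinarith
    rw [this]
    field_simp
end

section
/- Let ψ, Q ∈ ℝ, let ε ≥ 0 and let γ > 0. Then the relaxed seepage conditions ψ ≤ ε, Q ≤ 0 and Q·(ψ - ε) = 0 hold simultaneously if and only if ψ - ε = -(1/γ)·max(0, Q - γ·(ψ - ε)). -/
/-!
Write `a = ψ - ε`. For `γ > 0` the sign conditions `a ≤ 0`, `Q ≤ 0` with `Q * a = 0` say exactly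
that `max (γ * a) Q = 0`, and since `max 0 (Q - γ * a) + γ * a = max (γ * a) Q`, this is the
penalized equation multiplied by `γ`.
-/

variable {K : Type*} [Field K] [LinearOrder K] [IsStrictOrderedRing K]

theorem max_eq_zero_iff_complementarity {x y : K} :
    max x y = 0 ↔ x ≤ 0 ∧ y ≤ 0 ∧ x * y = 0 := by
  constructor
  · intro h
    obtain ⟨hx, hy⟩ := max_le_iff.mp h.le
    refine ⟨hx, hy, mul_eq_zero.mpr ?_⟩
    exact (max_choice x y).imp (fun hm => hm.symm.trans h) (fun hm => hm.symm.trans h)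
  · rintro ⟨hx, hy, hxy⟩
    rcases mul_eq_zero.mp hxy with rfl | rfl
    · exact max_eq_left hy
    · exact max_eq_right hx

theorem complementarity_iff_max_mul_left_eq_zero {γ a Q : K} (hγ : 0 < γ) :
    (a ≤ 0 ∧ Q ≤ 0 ∧ Q * a = 0) ↔ max (γ * a) Q = 0 := by
  have hγa : γ * a ≤ 0 ↔ a ≤ 0 := by simpa using mul_le_mul_iff_right₀ hγ (b := a) (c := 0)
  rw [max_eq_zero_iff_complementarity, hγa]
  simp only [mul_eq_zero, hγ.ne', false_or, or_comm]

theorem max_mul_left_eq_zero_iff_penalized {γ a Q : K} (hγ : 0 < γ) :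
    max (γ * a) Q = 0 ↔ a = -(1 / γ) * max 0 (Q - γ * a) := by
  have hmax : max 0 (Q - γ * a) + γ * a = max (γ * a) Q := by
    rw [← max_add_add_right, zero_add, sub_add_cancel]
  rw [← hmax, neg_mul, one_div_mul_eq_div, eq_neg_iff_add_eq_zero, add_div' _ _ _ hγ.ne',
    div_eq_zero_iff, or_iff_left hγ.ne', add_comm, mul_comm]

theorem relaxed_seepage_iff_penalized_general (ψ Q ε γ : ℝ) (hγ : 0 < γ) :
    (ψ ≤ ε ∧ Q ≤ 0 ∧ Q * (ψ - ε) = 0) ↔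
      ψ - ε = -(1 / γ) * max 0 (Q - γ * (ψ - ε)) := by
  rw [← sub_nonpos, complementarity_iff_max_mul_left_eq_zero hγ,
    max_mul_left_eq_zero_iff_penalized hγ]

/-- Relaxed seepage conditions `ψ ≤ ε`, `Q ≤ 0`, `Q·(ψ - ε) = 0` are equivalent to the
penalized equation `ψ - ε = -(1/γ)·max 0 (Q - γ·(ψ - ε))` for `γ > 0`. -/
theorem relaxed_seepage_iff_penalized (ψ Q ε γ : ℝ) (hε : 0 ≤ ε) (hγ : 0 < γ) :
    (ψ ≤ ε ∧ Q ≤ 0 ∧ Q * (ψ - ε) = 0) ↔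
      ψ - ε = -(1 / γ) * max 0 (Q - γ * (ψ - ε)) :=
  relaxed_seepage_iff_penalized_general ψ Q ε γ hγ
end

section
/- Let α > 0, m > 1 and K_S > 0, and define θ̂(ψ) = (1 + (-α·min(ψ,0))^m)^(-(m-1)/m) and K(ψ) = K_S · θ̂(ψ)^(1/2) · (1 - (1 - θ̂(ψ)^(m/(m-1)))^((m-1)/m))². Then the permeability K is monotone nondecreasing on ℝ: for all ψ₁ ≤ ψ₂ one has K(ψ₁) ≤ K(ψ₂). -/
/-- The Van Genuchten–Mualem permeability is monotone nondecreasing on `ℝ`. -/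
theorem vanGenuchtenMualem_permeability_monotone (α m KS : ℝ) (hα : 0 < α) (hm : 1 < m)
    (hKS : 0 < KS) (θhat K : ℝ → ℝ)
    (hθhat : ∀ ψ : ℝ, θhat ψ = (1 + (-(α * min ψ 0)) ^ m) ^ (-((m - 1) / m)))
    (hK : ∀ ψ : ℝ, K ψ = KS * (θhat ψ) ^ ((1 : ℝ) / 2) *
      (1 - (1 - (θhat ψ) ^ (m / (m - 1))) ^ ((m - 1) / m)) ^ 2) :
    Monotone K := by
  have hm0 : (0:ℝ) < m := lt_trans one_pos hm
  have hm1 : (0:ℝ) < m - 1 := by linarith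
  have hq : (0:ℝ) < (m - 1) / m := div_pos hm1 hm0
  have hp : (0:ℝ) < m / (m - 1) := div_pos hm0 hm1
  -- θhat is positive, ≤ 1
  have hθpos : ∀ ψ : ℝ, 0 < θhat ψ := by
    intro ψ
    rw [hθhat]
    apply Real.rpow_pos_of_pos
    have : (0:ℝ) ≤ (-(α * min ψ 0)) ^ m := by
      apply Real.rpow_nonneg
      have : min ψ 0 ≤ 0 := min_le_right _ _
      nlinarith
    linarith
  have hθle1 : ∀ ψ : ℝ, θhat ψ ≤ 1 := by
    intro ψ
    rw [hθhat]
    apply Real.rpow_le_one_of_one_le_of_nonpos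
    · have : (0:ℝ) ≤ (-(α * min ψ 0)) ^ m := by
        apply Real.rpow_nonneg
        have : min ψ 0 ≤ 0 := min_le_right _ _
        nlinarith
      linarith
    · linarith [hq]
  -- θhat is monotone
  have hθmono : Monotone θhat := by
    intro ψ1 ψ2 hle
    rw [hθhat, hθhat]
    have h1 : min ψ1 0 ≤ min ψ2 0 := min_le_min hle le_rfl
    have hn2 : (0:ℝ) ≤ -(α * min ψ2 0) := by
      have : min ψ2 0 ≤ 0 := min_le_right _ _
      nlinarith
    have h2 : -(α * min ψ2 0) ≤ -(α * min ψ1 0) := by nlinarith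
    have h3 : (-(α * min ψ2 0)) ^ m ≤ (-(α * min ψ1 0)) ^ m :=
      Real.rpow_le_rpow hn2 h2 (le_of_lt hm0)
    have hb2 : (0:ℝ) < 1 + (-(α * min ψ2 0)) ^ m := by
      have := Real.rpow_nonneg hn2 m
      linarith
    exact Real.rpow_le_rpow_of_nonpos hb2 (by linarith) (by linarith [hq])
  -- main monotonicity
  intro ψ1 ψ2 hle
  rw [hK, hK]
  set θ1 := θhat ψ1 with hθ1
  set θ2 := θhat ψ2 with hθ2
  have h01 : 0 < θ1 := hθpos ψ1
  have h02 : 0 < θ2 := hθpos ψ2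
  have h11 : θ1 ≤ 1 := hθle1 ψ1
  have h12 : θ2 ≤ 1 := hθle1 ψ2
  have hθ : θ1 ≤ θ2 := hθmono hle
  set p := m / (m - 1)
  set q := (m - 1) / m
  have hp1 : θ1 ^ p ≤ θ2 ^ p := Real.rpow_le_rpow h01.le hθ hp.le
  have hp1le : θ1 ^ p ≤ 1 := Real.rpow_le_one h01.le h11 hp.le
  have hp2le : θ2 ^ p ≤ 1 := Real.rpow_le_one h02.le h12 hp.le
  have hp1nn : 0 ≤ θ1 ^ p := Real.rpow_nonneg h01.le p
  have hp2nn : 0 ≤ θ2 ^ p := Real.rpow_nonneg h02.le p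
  have hq1 : (1 - θ2 ^ p) ^ q ≤ (1 - θ1 ^ p) ^ q :=
    Real.rpow_le_rpow (by linarith) (by linarith) hq.le
  have hq1le : (1 - θ1 ^ p) ^ q ≤ 1 := Real.rpow_le_one (by linarith) (by linarith) hq.le
  have hq2nn : 0 ≤ (1 - θ2 ^ p) ^ q := Real.rpow_nonneg (by linarith) q
  have hg1 : 0 ≤ 1 - (1 - θ1 ^ p) ^ q := by linarith
  have hg : 1 - (1 - θ1 ^ p) ^ q ≤ 1 - (1 - θ2 ^ p) ^ q := by linarith
  have hsq : (1 - (1 - θ1 ^ p) ^ q) ^ 2 ≤ (1 - (1 - θ2 ^ p) ^ q) ^ 2 :=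
    pow_le_pow_left₀ hg1 hg 2
  have hhalf : θ1 ^ ((1:ℝ)/2) ≤ θ2 ^ ((1:ℝ)/2) :=
    Real.rpow_le_rpow h01.le hθ (by norm_num)
  have h1nn : 0 ≤ θ1 ^ ((1:ℝ)/2) := Real.rpow_nonneg h01.le _
  have h2nn : 0 ≤ θ2 ^ ((1:ℝ)/2) := Real.rpow_nonneg h02.le _
  have hsqnn : 0 ≤ (1 - (1 - θ1 ^ p) ^ q) ^ 2 := sq_nonneg _
  apply mul_le_mul _ hsq hsqnn (by positivity)
  exact mul_le_mul_of_nonneg_left hhalf hKS.le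
end

section
/- Let α > 0 and m > 1, and define θ̂(ψ) = (1 + (-α·min(ψ,0))^m)^(-(m-1)/m). Then θ̂ is differentiable at every ψ ∈ ℝ, its derivative satisfies θ̂'(ψ) = (m-1)·α^m·(-ψ)^(m-1)·(1 + (-αψ)^m)^(-(2m-1)/m) ≥ 0 for ψ < 0 and θ̂'(ψ) = 0 for ψ ≥ 0, and the derivative θ̂' is bounded on ℝ, i.e. sup_{ψ ∈ ℝ} θ̂'(ψ) < ∞. -/
/-! In the variable `t = -(α ψ) ≥ 0` the saturation is `(1 + t ^ m) ^ (-(m-1)/m)`, whose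
derivative `-(m-1) t ^ (m-1) (1 + t ^ m) ^ (-(2m-1)/m)` vanishes at `t = 0` because `m > 1`;
so precomposing with the kink `ψ ↦ min ψ 0` still gives a differentiable function.
Boundedness comes from `t ^ (m-1) = (t ^ m) ^ ((m-1)/m) ≤ (1 + t ^ m) ^ ((m-1)/m)`, which bounds
`t ^ (m-1) (1 + t ^ m) ^ (-(2m-1)/m)` by `(1 + t ^ m)⁻¹ ≤ 1`. -/

open Set Filter

lemma hasDerivAt_comp_min {F F' : ℝ → ℝ} {a : ℝ} (hF : ∀ x ≤ a, HasDerivAt F (F' x) x)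
    (ha : F' a = 0) (x : ℝ) :
    HasDerivAt (fun y => F (min y a)) (if x < a then F' x else 0) x := by
  rcases lt_trichotomy x a with hx | rfl | hx
  · rw [if_pos hx]
    refine (hF x hx.le).congr_of_eventuallyEq ?_
    filter_upwards [eventually_lt_nhds hx] with y hy
    rw [min_eq_left hy.le]
  · rw [if_neg (lt_irrefl x), ← hasDerivWithinAt_univ, ← Iic_union_Ici]
    refine HasDerivWithinAt.union ?_ ?_
    · exact (ha ▸ (hF x le_rfl).hasDerivWithinAt).congr (fun y hy => by rw [min_eq_left hy])
        (by rw [min_self])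
    · exact (hasDerivWithinAt_const x _ (F x)).congr (fun y hy => by rw [min_eq_right hy])
        (by rw [min_self])
  · rw [if_neg (not_lt.mpr hx.le)]
    refine (hasDerivAt_const x (F a)).congr_of_eventuallyEq ?_
    filter_upwards [eventually_gt_nhds hx] with y hy
    rw [min_eq_right hy.le]

section OneAddRpow

variable {m t : ℝ}

lemma hasDerivAt_one_add_rpow_rpow (hm : 1 ≤ m) (ht : 0 ≤ t) :
    HasDerivAt (fun s => (1 + s ^ m) ^ (-((m - 1) / m)))
      (-(m - 1) * (t ^ (m - 1) * (1 + t ^ m) ^ (-((2 * m - 1) / m)))) t := by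
  have hpos : 0 < 1 + t ^ m := by positivity
  have hexp : -((m - 1) / m) - 1 = -((2 * m - 1) / m) := by
    field_simp
    ring
  convert ((Real.hasDerivAt_rpow_const (x := t) (Or.inr hm)).const_add 1).rpow_const
    (Or.inl hpos.ne') using 1
  rw [hexp]
  field_simp

lemma rpow_sub_one_mul_one_add_rpow_le_one (hm : 1 ≤ m) (ht : 0 ≤ t) :
    t ^ (m - 1) * (1 + t ^ m) ^ (-((2 * m - 1) / m)) ≤ 1 := by
  have hm0 : m ≠ 0 := by positivity
  have hpos : 0 < 1 + t ^ m := by positivity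
  have ht_pow : t ^ (m - 1) ≤ (1 + t ^ m) ^ ((m - 1) / m) := by
    calc t ^ (m - 1) = (t ^ m) ^ ((m - 1) / m) := by
          rw [← Real.rpow_mul ht, mul_div_cancel₀ _ hm0]
      _ ≤ (1 + t ^ m) ^ ((m - 1) / m) :=
          Real.rpow_le_rpow (by positivity) (by linarith) (div_nonneg (by linarith) (by linarith))
  calc t ^ (m - 1) * (1 + t ^ m) ^ (-((2 * m - 1) / m))
      ≤ (1 + t ^ m) ^ ((m - 1) / m) * (1 + t ^ m) ^ (-((2 * m - 1) / m)) := by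
        gcongr
    _ = (1 + t ^ m)⁻¹ := by
        rw [← Real.rpow_add hpos, ← Real.rpow_neg_one]
        congr 1
        field_simp
        ring
    _ ≤ 1 := inv_le_one_of_one_le₀ (by linarith [Real.rpow_nonneg ht m])

end OneAddRpow

lemma vanGenuchten_deriv_eq {α m ψ : ℝ} (hα : 0 < α) (hψ : ψ ≤ 0) :
    (m - 1) * α ^ m * (-ψ) ^ (m - 1) * (1 + (-(α * ψ)) ^ m) ^ (-((2 * m - 1) / m)) =
      (m - 1) * α *
        ((-(α * ψ)) ^ (m - 1) * (1 + (-(α * ψ)) ^ m) ^ (-((2 * m - 1) / m))) := by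
  have hα_pow : α * α ^ (m - 1) = α ^ m := by
    rw [Real.rpow_sub_one hα.ne']
    field_simp
  have hαψ_pow : (-(α * ψ)) ^ (m - 1) = α ^ (m - 1) * (-ψ) ^ (m - 1) := by
    rw [neg_mul_eq_mul_neg, Real.mul_rpow hα.le (neg_nonneg.mpr hψ)]
  rw [hαψ_pow, ← hα_pow]
  ring

/-- The Van Genuchten saturation `θ̂` is differentiable everywhere; its derivative equals
`(m-1)·α^m·(-ψ)^(m-1)·(1 + (-αψ)^m)^(-(2m-1)/m) ≥ 0` for `ψ < 0` and `0` for `ψ ≥ 0`,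
and the derivative is bounded on `ℝ`. -/
theorem vanGenuchten_saturation_deriv (α m : ℝ) (hα : 0 < α) (hm : 1 < m)
    (θhat θhat' : ℝ → ℝ)
    (hθhat : ∀ ψ : ℝ, θhat ψ = (1 + (-(α * min ψ 0)) ^ m) ^ (-((m - 1) / m)))
    (hθhat' : ∀ ψ : ℝ, θhat' ψ =
      if ψ < 0 then
        (m - 1) * α ^ m * (-ψ) ^ (m - 1) * (1 + (-(α * ψ)) ^ m) ^ (-((2 * m - 1) / m))
      else 0) :
    (∀ ψ : ℝ, HasDerivAt θhat (θhat' ψ) ψ) ∧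
      (∀ ψ : ℝ, ψ < 0 → 0 ≤ θhat' ψ) ∧
      ∃ M : ℝ, ∀ ψ : ℝ, θhat' ψ ≤ M := by
  set G : ℝ → ℝ := fun ψ =>
    (-(α * ψ)) ^ (m - 1) * (1 + (-(α * ψ)) ^ m) ^ (-((2 * m - 1) / m))
  have hθhat'_eq (ψ : ℝ) : θhat' ψ = if ψ < 0 then (m - 1) * α * G ψ else 0 := by
    rw [hθhat' ψ]
    split_ifs with hψ
    exacts [vanGenuchten_deriv_eq hα hψ.le, rfl]
  refine ⟨fun ψ => ?_, fun ψ hψ => ?_, ⟨(m - 1) * α, fun ψ => ?_⟩⟩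
  · have hG_zero : (m - 1) * α * G 0 = 0 := by
      simp [G, Real.zero_rpow (by linarith : m - 1 ≠ 0)]
    rw [funext hθhat, hθhat'_eq]
    refine hasDerivAt_comp_min (F := fun x => (1 + (-(α * x)) ^ m) ^ (-((m - 1) / m)))
      (F' := fun x => (m - 1) * α * G x) (fun x hx => ?_) hG_zero ψ
    refine ((hasDerivAt_one_add_rpow_rpow hm.le (by nlinarith : 0 ≤ -(α * x))).comp x
      ((hasDerivAt_id x).const_mul α).neg).congr_deriv ?_
    simp only [G]
    ring
  · rw [hθhat'_eq, if_pos hψ]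
    have ht : 0 ≤ -(α * ψ) := by nlinarith
    exact mul_nonneg (by nlinarith) (by positivity)
  · rw [hθhat'_eq]
    split_ifs with hψ
    · have hG_le : G ψ ≤ 1 := rpow_sub_one_mul_one_add_rpow_le_one hm.le (by nlinarith)
      nlinarith [mul_le_mul_of_nonneg_left hG_le (by nlinarith : 0 ≤ (m - 1) * α)]
    · nlinarith
end

section
/- Let a, b ∈ ℝ. Then the conditions a ≤ 0, b ≤ 0 and a·b = 0 hold simultaneously if and only if for every γ > 0 one has a = -(1/γ)·max(0, b - γ·a). -/
/-!
Substituting `x = -γ a` turns the penalized equation into the fixed-point equation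
`x = max 0 (b + x)`, which for a single `γ > 0` already encodes `0 ≤ x`, `b ≤ 0`, `x b = 0`:
either `b + x ≤ 0` and then `x = 0`, or `b + x ≥ 0` and then `b = 0`.
-/

theorem eq_max_zero_add_iff {R : Type*} [Ring R] [LinearOrder R] [IsStrictOrderedRing R]
    {x b : R} : x = max 0 (b + x) ↔ 0 ≤ x ∧ b ≤ 0 ∧ x * b = 0 := by
  constructor
  · intro h
    rcases le_total (b + x) 0 with hneg | hpos
    · have hx : x = 0 := by rwa [max_eq_left hneg] at h
      subst hx
      exact ⟨le_rfl, by simpa using hneg, zero_mul b⟩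
    · have hb : b = 0 := add_eq_right.mp (h.trans (max_eq_right hpos)).symm
      subst hb
      exact ⟨by simpa using hpos, le_rfl, mul_zero x⟩
  · rintro ⟨hx, hb, hxb⟩
    rcases mul_eq_zero.mp hxb with rfl | rfl
    · simp [hb]
    · simp [hx]

theorem eq_neg_one_div_mul_max_iff {K : Type*} [Field K] [LinearOrder K]
    [IsStrictOrderedRing K] {a b γ : K} (hγ : 0 < γ) :
    a = -(1 / γ) * max 0 (b - γ * a) ↔ a ≤ 0 ∧ b ≤ 0 ∧ a * b = 0 := by
  have hrescale : a = -(1 / γ) * max 0 (b - γ * a) ↔ -γ * a = max 0 (b + -γ * a) := by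
    rw [neg_mul γ a, ← sub_eq_add_neg]
    generalize max 0 (b - γ * a) = m
    constructor <;> intro h
    · rw [h]; field_simp
    · rw [← h]; field_simp
  have hsign : 0 ≤ -γ * a ↔ a ≤ 0 := by
    rw [neg_mul, ← mul_neg, mul_nonneg_iff_of_pos_left hγ, neg_nonneg]
  have hprod : -γ * a * b = 0 ↔ a * b = 0 := by
    simp [mul_assoc, hγ.ne']
  rw [hrescale, eq_max_zero_add_iff, hsign, hprod]

/-- Parameter-free formulation: the complementarity conditions `a ≤ 0`, `b ≤ 0`, `a·b = 0`
hold iff the penalized equation `a = -(1/γ)·max 0 (b - γ·a)` holds for every `γ > 0`. -/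
theorem complementarity_iff_forall_penalized (a b : ℝ) :
    (a ≤ 0 ∧ b ≤ 0 ∧ a * b = 0) ↔
      ∀ γ : ℝ, 0 < γ → a = -(1 / γ) * max 0 (b - γ * a) :=
  ⟨fun h _ hγ => (eq_neg_one_div_mul_max_iff hγ).2 h,
    fun h => (eq_neg_one_div_mul_max_iff one_pos).1 (h 1 one_pos)⟩
end
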